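/- Let p be a prime, c ∈ ℚ_p, and k ∈ ℤ. The Fourier transform of the indicator function of the ball B(c, p^k) is given by 1_{B(c,p^k)}^(ξ) = χ(-cξ) · p^k · 1_{B(0,p^{-k})}(ξ), where χ is the standard additive character of ℚ_p. -/

import Mathlib

open MeasureTheory

noncomputable instance (p : ℕ) [Fact p.Prime] : MeasurableSpace ℚ_[p] := borel _
instance (p : ℕ) [Fact p.Prime] : BorelSpace ℚ_[p] := ⟨rfl⟩

/-- Haar measure on `ℚ_[p]`, normalized so that `ℤ_p` (the closed unit ball) has measure 1. -/
noncomputable def haarQp (p : ℕ) [Fact p.Prime] : Measure ℚ_[p] :=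
  Measure.addHaarMeasure
    ⟨⟨Metric.closedBall 0 1, isCompact_closedBall 0 1⟩,
      ⟨0, by
        rw [mem_interior_iff_mem_nhds]
        exact Metric.closedBall_mem_nhds 0 one_pos⟩⟩

/-- The standard additive character `χ(x) = e^{2πi {x}}` of `ℚ_[p]`, where `{x}` is the
p-adic fractional part of `x`. -/
noncomputable def stdChar (p : ℕ) [hp : Fact p.Prime] (x : ℚ_[p]) : ℂ :=
  let n : ℕ := (-x.valuation).toNat
  let y : ℤ_[p] := ⟨(p : ℚ_[p]) ^ n * x, by
    by_cases hx : x = 0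
    · simp [hx]
    · rw [norm_mul, norm_pow, Padic.norm_p, Padic.norm_eq_zpow_neg_valuation hx]
      have h1 : (1:ℝ) < p := by exact_mod_cast hp.out.one_lt
      have h0 : (0:ℝ) < p := by positivity
      rw [inv_pow, ← zpow_natCast, ← zpow_neg, ← zpow_add₀ (ne_of_gt h0)]
      apply zpow_le_one_of_nonpos₀ h1.le
      have h2 : -x.valuation ≤ ((-x.valuation).toNat : ℤ) := Int.self_le_toNat _
      omega⟩
  Complex.exp (2 * Real.pi * Complex.I * ((y.appr n : ℂ) / (p : ℂ) ^ n))

/-! Any approximation `a / p ^ m` of `x` modulo `ℤ_[p]` computes `χ x = exp (2πi a / p ^ m)`, so `χ`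
is an additive character, trivial on `ℤ_[p]`, with `χ (1 / p) = exp (2πi / p) ≠ 1`. Translating the
ball by `c` pulls out `χ (-cξ)` and leaves the integral of the character `x ↦ χ (-ξx)` over the
subgroup `B(0, p^k)`. If `‖ξ‖ ≤ p^{-k}` that character is `1` there and the integral is the volume
`p^k`: since `ℤ_[p]` is the disjoint union of the `p` balls `B(j, p⁻¹)`, `0 ≤ j < p`, scaling by
`p⁻¹` multiplies Haar measure by `p`. Otherwise it is nontrivial on the subgroup (at `(ξp)⁻¹`), and
translation invariance forces the integral to vanish. -/

open Metric Complex Function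
open scoped Real ENNReal NNReal Pointwise

section AddChar

variable {G : Type*} [AddGroup G] [MeasurableSpace G] [MeasurableAdd G]
  (μ : Measure G) [μ.IsAddRightInvariant] (ψ : AddChar G ℂ)

lemma setIntegral_image_add_right_addChar (s : Set G) (c : G) :
    ∫ x in (· + c) '' s, ψ x ∂μ = ψ c * ∫ x in s, ψ x ∂μ := by
  rw [(measurePreserving_add_right μ c).setIntegral_image_emb (measurableEmbedding_addRight c),
    ← integral_const_mul]
  simp_rw [AddChar.map_add_eq_mul, mul_comm]

lemma setIntegral_addSubgroup_addChar_eq_zero (H : AddSubgroup G) {t : G} (ht : t ∈ H)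
    (hψ : ψ t ≠ 1) : ∫ x in (H : Set G), ψ x ∂μ = 0 := by
  have hH : (· + t) '' (H : Set G) = H := by
    ext x
    simp [Set.image_add_right, H.add_mem_cancel_right (H.neg_mem ht)]
  have h := setIntegral_image_add_right_addChar μ ψ H t
  rw [hH, ← sub_eq_zero, ← one_sub_mul] at h
  exact (mul_eq_zero.1 h).resolve_left (sub_ne_zero.2 hψ.symm)

end AddChar

lemma setIntegral_closedBall_addChar {E : Type*} [SeminormedAddCommGroup E] [MeasurableSpace E]
    [MeasurableAdd E] (μ : Measure E) [μ.IsAddRightInvariant] (ψ : AddChar E ℂ) (c : E) (r : ℝ) :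
    ∫ x in closedBall c r, ψ x ∂μ = ψ c * ∫ x in closedBall 0 r, ψ x ∂μ := by
  rw [← setIntegral_image_add_right_addChar]
  congr
  ext x
  simp [dist_eq_norm]

lemma units_smul_closedBall_zero {𝕜 : Type*} [NormedField 𝕜] (u : 𝕜ˣ) (r : ℝ) :
    u • closedBall (0 : 𝕜) r = closedBall 0 (‖(u : 𝕜)‖ * r) := by
  change (u : 𝕜) • closedBall (0 : 𝕜) r = _
  rw [smul_closedBall' u.ne_zero, smul_zero]

variable {p : ℕ} [hp : Fact p.Prime]

lemma exp_two_pi_I_div_pow_eq_of_dist_le_one {a b : ℤ} {m n : ℕ}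
    (h : dist ((a : ℚ_[p]) / p ^ m) (b / p ^ n) ≤ 1) :
    exp (2 * π * I * (a / p ^ m)) = exp (2 * π * I * (b / p ^ n)) := by
  have hpQ : (p : ℚ_[p]) ≠ 0 := by exact_mod_cast hp.out.ne_zero
  have hpC : (p : ℂ) ≠ 0 := by exact_mod_cast hp.out.ne_zero
  obtain ⟨z, hz⟩ : (p ^ (m + n) : ℤ) ∣ a * p ^ n - b * p ^ m := by
    rw [← Padic.norm_int_le_pow_iff_dvd]
    have : ((a * p ^ n - b * p ^ m : ℤ) : ℚ_[p]) = p ^ (m + n) * (a / p ^ m - b / p ^ n) := by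
      push_cast
      field_simp
      ring
    rw [this, norm_mul, norm_pow, Padic.norm_p, inv_pow, zpow_neg, zpow_natCast]
    exact mul_le_of_le_one_right (by positivity) (by rwa [← dist_eq_norm])
  have hzC : (a : ℂ) / p ^ m = b / p ^ n + z := by
    have := congrArg (fun t : ℤ => (t : ℂ)) hz
    push_cast at this
    field_simp
    linear_combination this
  rw [hzC, mul_add, exp_add, mul_comm _ (z : ℂ), exp_int_mul_two_pi_mul_I, mul_one]

lemma dist_appr_div_pow_le_one {x : ℚ_[p]} {n : ℕ} {y : ℤ_[p]} (hy : (y : ℚ_[p]) = p ^ n * x) :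
    dist x (y.appr n / p ^ n) ≤ 1 := by
  obtain ⟨z, hz⟩ := Ideal.mem_span_singleton'.1 (PadicInt.appr_spec n y)
  have hpQ : (p : ℚ_[p]) ≠ 0 := by exact_mod_cast hp.out.ne_zero
  have hxz : x - y.appr n / p ^ n = z := by
    have := congrArg (fun t : ℤ_[p] => (t : ℚ_[p])) hz
    push_cast at this
    rw [hy] at this
    field_simp
    linear_combination -this
  rw [dist_eq_norm, hxz]
  exact z.norm_le_one

lemma exists_dist_int_div_pow_le_one (x : ℚ_[p]) :
    ∃ (a : ℤ) (m : ℕ), dist x (a / p ^ m) ≤ 1 := by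
  obtain ⟨m, hm⟩ := pow_unbounded_of_one_lt ‖x‖ (by exact_mod_cast hp.out.one_lt : (1 : ℝ) < p)
  have hy : ‖(p : ℚ_[p]) ^ m * x‖ ≤ 1 := by
    rw [norm_mul, norm_pow, Padic.norm_p, inv_pow]
    exact inv_mul_le_one_of_le₀ hm.le (by positivity)
  let y : ℤ_[p] := ⟨_, hy⟩
  refine ⟨y.appr m, m, ?_⟩
  rw [Int.cast_natCast]
  exact dist_appr_div_pow_le_one rfl

lemma stdChar_eq_exp {x : ℚ_[p]} {a : ℤ} {m : ℕ} (h : dist x (a / p ^ m) ≤ 1) :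
    stdChar p x = exp (2 * π * I * (a / p ^ m)) := by
  suffices ∀ (n : ℕ) (y : ℤ_[p]), (y : ℚ_[p]) = p ^ n * x →
      exp (2 * π * I * ((y.appr n : ℂ) / p ^ n)) = exp (2 * π * I * (a / p ^ m)) from
    this _ _ rfl
  intro n y hy
  have hdist := (dist_triangle_max _ x _).trans
    (max_le ((dist_comm _ x).trans_le (dist_appr_div_pow_le_one hy)) h)
  rw [← Int.cast_natCast (R := ℚ_[p])] at hdist
  have := exp_two_pi_I_div_pow_eq_of_dist_le_one hdist
  rwa [Int.cast_natCast] at this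

lemma stdChar_eq_one_of_norm_le_one {x : ℚ_[p]} (h : ‖x‖ ≤ 1) : stdChar p x = 1 := by
  simpa using stdChar_eq_exp (a := 0) (m := 0) (by simpa using h)

lemma stdChar_add (x y : ℚ_[p]) : stdChar p (x + y) = stdChar p x * stdChar p y := by
  obtain ⟨a, m, ha⟩ := exists_dist_int_div_pow_le_one x
  obtain ⟨b, n, hb⟩ := exists_dist_int_div_pow_le_one y
  have hpQ : (p : ℚ_[p]) ≠ 0 := by exact_mod_cast hp.out.ne_zero
  have hpC : (p : ℂ) ≠ 0 := by exact_mod_cast hp.out.ne_zero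
  have hsumQ : ((a * p ^ n + b * p ^ m : ℤ) : ℚ_[p]) / p ^ (m + n) = a / p ^ m + b / p ^ n := by
    push_cast
    field_simp
    ring
  have hsumC : ((a * p ^ n + b * p ^ m : ℤ) : ℂ) / p ^ (m + n) = a / p ^ m + b / p ^ n := by
    push_cast
    field_simp
    ring
  have hab : dist (x + y) (((a * p ^ n + b * p ^ m : ℤ) : ℚ_[p]) / p ^ (m + n)) ≤ 1 := by
    rw [hsumQ, dist_eq_norm, add_sub_add_comm]
    exact (IsUltrametricDist.norm_add_le_max _ _).trans
      (max_le (dist_eq_norm x _ ▸ ha) (dist_eq_norm y _ ▸ hb))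
  rw [stdChar_eq_exp ha, stdChar_eq_exp hb, stdChar_eq_exp hab, hsumC, ← exp_add]
  ring_nf

variable (p) in
noncomputable def stdAddChar : AddChar ℚ_[p] ℂ where
  toFun := stdChar p
  map_zero_eq_one' := stdChar_eq_one_of_norm_le_one (by simp)
  map_add_eq_mul' := stdChar_add

lemma stdChar_inv_p_ne_one : stdChar p (p : ℚ_[p])⁻¹ ≠ 1 := by
  have h := stdChar_eq_exp (p := p) (x := (p : ℚ_[p])⁻¹) (a := 1) (m := 1) (by simp)
  rw [h]
  simpa [div_eq_mul_inv, mul_assoc] using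
    (isPrimitiveRoot_exp p hp.out.ne_zero).ne_one hp.out.one_lt

instance : (haarQp p).IsAddHaarMeasure := by unfold haarQp; infer_instance
instance : (haarQp p).Regular := by unfold haarQp; infer_instance

lemma closedBall_zero_one_eq_iUnion :
    closedBall (0 : ℚ_[p]) 1 = ⋃ j : Fin p, closedBall (j : ℚ_[p]) (p : ℝ)⁻¹ := by
  ext x
  simp only [mem_closedBall, Set.mem_iUnion, dist_eq_norm, sub_zero]
  constructor
  · intro hx
    let y : ℤ_[p] := ⟨x, hx⟩
    obtain ⟨j, hjp, hj⟩ := PadicInt.exists_mem_range y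
    refine ⟨⟨j, hjp⟩, ?_⟩
    rw [IsLocalRing.mem_maximalIdeal, PadicInt.mem_nonunits, PadicInt.norm_def] at hj
    push_cast at hj
    simpa using (Padic.norm_lt_pow_iff_norm_le_pow_sub_one _ 0).1 (by simpa using hj)
  · rintro ⟨j, hj⟩
    calc ‖x‖ = ‖(x - j) + j‖ := by rw [sub_add_cancel]
      _ ≤ max ‖x - j‖ ‖(j : ℚ_[p])‖ := IsUltrametricDist.norm_add_le_max _ _
      _ ≤ 1 := max_le (hj.trans (inv_le_one_of_one_le₀ (by exact_mod_cast hp.out.one_le)))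
          (by exact_mod_cast Padic.norm_int_le_one j)

lemma pairwise_disjoint_closedBall_natCast :
    Pairwise (Disjoint on fun j : Fin p ↦ closedBall (j : ℚ_[p]) (p : ℝ)⁻¹) := by
  intro i j hij
  rw [onFun, Set.disjoint_left]
  intro x hxi hxj
  have hlt : ‖((j - i : ℤ) : ℚ_[p])‖ < 1 := by
    push_cast
    calc ‖(j : ℚ_[p]) - i‖ ≤ max (dist (j : ℚ_[p]) x) (dist x i) := by
          rw [← dist_eq_norm]; exact dist_triangle_max _ _ _
      _ ≤ (p : ℝ)⁻¹ := max_le (by rwa [dist_comm]) hxi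
      _ < 1 := inv_lt_one_of_one_lt₀ (by exact_mod_cast hp.out.one_lt)
  have hmod : (i : ℕ) ≡ j [MOD p] := Nat.modEq_iff_dvd.2 (Padic.norm_intCast_lt_one_iff.1 hlt)
  exact hij (Fin.ext (hmod.eq_of_lt_of_lt i.2 j.2))

lemma haarQp_closedBall_one : haarQp p (closedBall 0 1) = 1 :=
  Measure.addHaarMeasure_self

lemma haarQp_closedBall_one_eq_mul :
    haarQp p (closedBall 0 1) = p * haarQp p (closedBall 0 (p : ℝ)⁻¹) := by
  rw [closedBall_zero_one_eq_iUnion, measure_iUnion pairwise_disjoint_closedBall_natCast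
    (fun _ ↦ measurableSet_closedBall)]
  simp [Measure.addHaar_closedBall_center]

lemma haarQp_real_closedBall_zpow (k : ℤ) :
    (haarQp p).real (closedBall 0 ((p : ℝ) ^ k)) = p ^ k := by
  have hp0 : (p : ℝ) ≠ 0 := by exact_mod_cast hp.out.ne_zero
  set u := Units.mk0 (p : ℚ_[p])⁻¹ (by simp [hp.out.ne_zero])
  have hu : distribHaarChar ℚ_[p] u = p := by
    refine distribHaarChar_eq_of_measure_smul_eq_mul (μ := haarQp p)
      (measure_closedBall_pos _ 0 (inv_pos.2 (Nat.cast_pos.2 hp.out.pos))).ne'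
      measure_closedBall_lt_top.ne ?_
    rw [units_smul_closedBall_zero, Units.val_mk0, norm_inv, Padic.norm_p, inv_inv,
      mul_inv_cancel₀ hp0, haarQp_closedBall_one_eq_mul]
    simp
  have hball : closedBall (0 : ℚ_[p]) ((p : ℝ) ^ k) = u ^ k • closedBall 0 1 := by
    rw [units_smul_closedBall_zero, Units.val_zpow_eq_zpow_val, Units.val_mk0, norm_zpow,
      norm_inv, Padic.norm_p, inv_inv, mul_one]
  rw [measureReal_def, hball, ← distribHaarChar_mul, map_zpow, hu, haarQp_closedBall_one, mul_one,
    ENNReal.coe_toReal, NNReal.coe_zpow, NNReal.coe_natCast]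

lemma setIntegral_mulShift_stdAddChar_of_norm_le {η : ℚ_[p]} {k : ℤ}
    (h : ‖η‖ ≤ (p : ℝ) ^ (-k)) :
    ∫ x in closedBall 0 ((p : ℝ) ^ k), (stdAddChar p).mulShift η x ∂haarQp p = (p : ℂ) ^ k := by
  have hp0 : (p : ℝ) ≠ 0 := by exact_mod_cast hp.out.ne_zero
  have hone : ∀ x ∈ closedBall (0 : ℚ_[p]) ((p : ℝ) ^ k), (stdAddChar p).mulShift η x = 1 := by
    intro x hx
    refine stdChar_eq_one_of_norm_le_one ?_
    rw [mem_closedBall_zero_iff] at hx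
    calc ‖η * x‖ = ‖η‖ * ‖x‖ := norm_mul _ _
      _ ≤ (p : ℝ) ^ (-k) * (p : ℝ) ^ k := by gcongr
      _ = 1 := by rw [← zpow_add₀ hp0, neg_add_cancel, zpow_zero]
  rw [setIntegral_congr_fun measurableSet_closedBall hone, setIntegral_const,
    haarQp_real_closedBall_zpow]
  simp

lemma setIntegral_mulShift_stdAddChar_eq_zero_of_lt_norm {η : ℚ_[p]} {k : ℤ}
    (h : (p : ℝ) ^ (-k) < ‖η‖) :
    ∫ x in closedBall 0 ((p : ℝ) ^ k), (stdAddChar p).mulShift η x ∂haarQp p = 0 := by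
  have hp0 : (p : ℝ) ≠ 0 := by exact_mod_cast hp.out.ne_zero
  have hη : η ≠ 0 := norm_pos_iff.1 ((zpow_pos (by positivity) _).trans h)
  set t : ℚ_[p] := (η * p)⁻¹
  have ht : ‖t‖ ≤ (p : ℝ) ^ k := by
    have h' : (p : ℝ) ^ (-k + 1) ≤ ‖η‖ := by
      rwa [← not_lt, ← Padic.norm_le_pow_iff_norm_lt_pow_add_one, not_le]
    calc ‖t‖ = p * ‖η‖⁻¹ := by simp [t, mul_comm]
      _ ≤ p * ((p : ℝ) ^ (-k + 1))⁻¹ := by gcongr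
      _ = (p : ℝ) ^ k := by
        rw [← zpow_neg, neg_add, neg_neg, zpow_add₀ hp0, zpow_neg_one]
        field_simp
  have hψt : (stdAddChar p).mulShift η t = stdChar p (p : ℚ_[p])⁻¹ := by
    rw [AddChar.mulShift_apply]
    change stdChar p (η * (η * p)⁻¹) = _
    rw [mul_inv, mul_inv_cancel_left₀ hη]
  exact setIntegral_addSubgroup_addChar_eq_zero _ _
    (IsUltrametricDist.closedBall_openAddSubgroup ℚ_[p] (zpow_pos (by positivity) k)).toAddSubgroup
    (mem_closedBall_zero_iff.2 ht) (hψt ▸ stdChar_inv_p_ne_one)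

/-- The Fourier transform of the indicator of the ball `B(c, p^k)` is
`χ(-cξ) · p^k · 1_{B(0,p^{-k})}(ξ)`. -/
theorem stmt8 (p : ℕ) [Fact p.Prime] (c : ℚ_[p]) (k : ℤ) (ξ : ℚ_[p]) :
    ∫ x, Set.indicator {x : ℚ_[p] | ‖x - c‖ ≤ (p : ℝ) ^ k} (fun _ => (1 : ℂ)) x *
        (stdChar p (ξ * x))⁻¹ ∂(haarQp p)
      = stdChar p (-(c * ξ)) * (p : ℂ) ^ k *
          Set.indicator {η : ℚ_[p] | ‖η‖ ≤ (p : ℝ) ^ (-k)} (fun _ => (1 : ℂ)) ξ := by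
  set ψ := (stdAddChar p).mulShift (-ξ)
  have hψ (x : ℚ_[p]) : (stdChar p (ξ * x))⁻¹ = ψ x := by
    rw [AddChar.mulShift_apply, neg_mul, AddChar.map_neg_eq_inv]
    rfl
  have hψc : ψ c = stdChar p (-(c * ξ)) := by
    rw [AddChar.mulShift_apply, neg_mul, mul_comm]
    rfl
  have hball : {x : ℚ_[p] | ‖x - c‖ ≤ (p : ℝ) ^ k} = closedBall c ((p : ℝ) ^ k) := by
    ext
    simp [dist_eq_norm]
  simp_rw [hψ, hball, ← Set.indicator_mul_left, one_mul]
  rw [integral_indicator measurableSet_closedBall, setIntegral_closedBall_addChar, hψc, mul_assoc]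
  congr 1
  by_cases hξ : ‖ξ‖ ≤ (p : ℝ) ^ (-k)
  · rw [Set.indicator_of_mem (show ξ ∈ {η : ℚ_[p] | ‖η‖ ≤ (p : ℝ) ^ (-k)} from hξ), mul_one,
      setIntegral_mulShift_stdAddChar_of_norm_le (by rwa [norm_neg])]
  · rw [Set.indicator_of_notMem (show ξ ∉ {η : ℚ_[p] | ‖η‖ ≤ (p : ℝ) ^ (-k)} from hξ), mul_zero,
      setIntegral_mulShift_stdAddChar_eq_zero_of_lt_norm (by rw [norm_neg]; exact not_le.1 hξ)]
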